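/- arXiv:1905.03597 — 3 statements merged into one kernel-verified Lean document; each statement's English description precedes it below -/
import Mathlib

section
/- Let p ≥ 2 be a real number. Then for all vectors a, b ∈ ℝⁿ, 2^{2−p}·|a − b|^p ≤ ⟨ |a|^{p−2}·a − |b|^{p−2}·b , a − b ⟩, where ⟨·,·⟩ is the Euclidean inner product and |·| the Euclidean norm. -/
open scoped RealInnerProductSpace

private lemma key_scalar {s A B D : ℝ} (hs : 0 ≤ s) (hA : 0 ≤ A) (hB : 0 ≤ B)
    (hD : 0 ≤ D) (hDAB : D ≤ A + B) :
    (D / 2) ^ s * D ^ 2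
      ≤ (A ^ s - B ^ s) * (A ^ 2 - B ^ 2) / 2 + (A ^ s + B ^ s) * D ^ 2 / 2 := by
  have hK : 0 ≤ (A ^ s - B ^ s) * (A ^ 2 - B ^ 2) := by
    rcases le_total A B with h | h
    · have h1 := sub_nonneg.2 (Real.rpow_le_rpow hA h hs)
      have h2 := sub_nonneg.2 (pow_le_pow_left₀ hA h 2)
      nlinarith [mul_nonneg h1 h2]
    · exact mul_nonneg (sub_nonneg.2 (Real.rpow_le_rpow hB h hs))
        (sub_nonneg.2 (pow_le_pow_left₀ hB h 2))
  have h1 : (D / 2) ^ s ≤ ((A + B) / 2) ^ s :=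
    Real.rpow_le_rpow (by positivity) (by linarith) hs
  have hM0 : (0:ℝ) ≤ ((A + B) / 2) ^ s := by positivity
  have hD2 : D ^ 2 ≤ (A + B) ^ 2 := by nlinarith
  have hDsq : (0:ℝ) ≤ D ^ 2 := by positivity
  have hstep : (D / 2) ^ s * D ^ 2 ≤ ((A + B) / 2) ^ s * D ^ 2 :=
    mul_le_mul_of_nonneg_right h1 hDsq
  rcases le_or_gt (((A + B) / 2) ^ s) ((A ^ s + B ^ s) / 2) with hc | hc
  · nlinarith [mul_le_mul_of_nonneg_right hc hDsq]
  · -- use convexity of x ^ (s+1)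
    have hconv := (convexOn_rpow (by linarith : (1:ℝ) ≤ s + 1)).2
      (Set.mem_Ici.2 hA) (Set.mem_Ici.2 hB)
      (by norm_num : (0:ℝ) ≤ 1/2) (by norm_num : (0:ℝ) ≤ 1/2) (by norm_num)
    simp only [smul_eq_mul] at hconv
    have hs1 : s + 1 ≠ 0 := by linarith
    have eA : A ^ (s+1) = A ^ s * A := Real.rpow_add_one' hA hs1
    have eB : B ^ (s+1) = B ^ s * B := Real.rpow_add_one' hB hs1
    have eM : ((A + B) / 2) ^ (s+1) = ((A + B) / 2) ^ s * ((A + B) / 2) :=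
      Real.rpow_add_one' (by positivity) hs1
    have h2 : (1:ℝ)/2 * A + 1/2 * B = (A + B) / 2 := by ring
    rw [h2, eM] at hconv
    have hgap : (((A + B) / 2) ^ s - (A ^ s + B ^ s) / 2) * D ^ 2
        ≤ (((A + B) / 2) ^ s - (A ^ s + B ^ s) / 2) * (A + B) ^ 2 :=
      mul_le_mul_of_nonneg_left hD2 (by linarith)
    nlinarith [mul_le_mul_of_nonneg_left hconv (by linarith : (0:ℝ) ≤ 2 * (A + B))]

/-- Vector inequality (A1): for `p ≥ 2` and all `a, b ∈ ℝⁿ`,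
`2^{2-p} |a-b|^p ≤ ⟨|a|^{p-2} a - |b|^{p-2} b, a - b⟩`. -/
theorem vector_inequality_A1 {n : ℕ} (p : ℝ) (hp : 2 ≤ p)
    (a b : EuclideanSpace ℝ (Fin n)) :
    (2 : ℝ) ^ (2 - p) * ‖a - b‖ ^ p
      ≤ ⟪‖a‖ ^ (p - 2) • a - ‖b‖ ^ (p - 2) • b, a - b⟫ := by
  set A := ‖a‖ with hA'
  set B := ‖b‖ with hB'
  set D := ‖a - b‖ with hD'
  have hA : 0 ≤ A := norm_nonneg _
  have hB : 0 ≤ B := norm_nonneg _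
  have hD : 0 ≤ D := norm_nonneg _
  have hs : 0 ≤ p - 2 := by linarith
  have hDAB : D ≤ A + B := norm_sub_le a b
  have hinner : ⟪A ^ (p - 2) • a - B ^ (p - 2) • b, a - b⟫
      = A ^ (p - 2) * A ^ 2 + B ^ (p - 2) * B ^ 2
        - (A ^ (p - 2) + B ^ (p - 2)) * ⟪a, b⟫ := by
    simp only [inner_sub_left, inner_sub_right, real_inner_smul_left,
      real_inner_self_eq_norm_sq, real_inner_comm b a]
    ring
  have hD2 : D ^ 2 = A ^ 2 + B ^ 2 - 2 * ⟪a, b⟫ := by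
    rw [hD', hA', hB', norm_sub_sq_real]; ring
  have hLHS : (2 : ℝ) ^ (2 - p) * D ^ p = (D / 2) ^ (p - 2) * D ^ 2 := by
    rcases eq_or_lt_of_le hD with h | h
    · rw [← h]
      rw [Real.zero_rpow (by linarith : p ≠ 0)]
      norm_num
    · have e1 : D ^ p = D ^ (p - 2) * D ^ 2 := by
        rw [← Real.rpow_natCast D 2, ← Real.rpow_add h]
        norm_num
      have e2 : (2:ℝ) ^ (2 - p) = ((2:ℝ) ^ (p - 2))⁻¹ := by
        rw [show (2:ℝ) - p = -(p - 2) by ring, Real.rpow_neg (by norm_num : (0:ℝ) ≤ 2)]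
      rw [e1, Real.div_rpow hD (by norm_num : (0:ℝ) ≤ 2), e2]
      ring
  rw [hinner, hLHS]
  have heq : A ^ (p - 2) * A ^ 2 + B ^ (p - 2) * B ^ 2
      - (A ^ (p - 2) + B ^ (p - 2)) * ⟪a, b⟫
      = (A ^ (p - 2) - B ^ (p - 2)) * (A ^ 2 - B ^ 2) / 2
        + (A ^ (p - 2) + B ^ (p - 2)) * D ^ 2 / 2 := by
    linear_combination (-(A ^ (p - 2) + B ^ (p - 2)) / 2) * hD2
  rw [heq]
  exact key_scalar hs hA hB hD hDAB
end

section
/- Let p ≥ 2 be a real number. Then there exists a constant c(p) ∈ (0, 1] such that for all vectors a, b ∈ ℝⁿ, |b|^p ≥ |a|^p + p·⟨ |a|^{p−2}·a , b − a ⟩ + c(p)·|b − a|^p. -/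
open scoped RealInnerProductSpace

open Real

/-- Scalar tangent inequality: `s^p + p s^{p-2}(s t - s^2) ≤ t^p`. -/
lemma scalar_tangent_aux (p s t : ℝ) (hp : 2 ≤ p) (hs : 0 ≤ s) (ht : 0 ≤ t) :
    s ^ p + p * (s ^ (p - 2) * (s * t - s ^ 2)) ≤ t ^ p := by
  have hp0 : (0:ℝ) < p := by linarith
  rcases eq_or_lt_of_le hs with h0 | hs'
  · rw [← h0]
    simp [Real.zero_rpow hp0.ne']
    positivity
  · -- Bernoulli with 1 + u = t/s
    have hu : (-1:ℝ) ≤ t / s - 1 := by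
      have : 0 ≤ t / s := div_nonneg ht hs
      linarith
    have hb := one_add_mul_self_le_rpow_one_add hu (by linarith : (1:ℝ) ≤ p)
    have h1 : (1 : ℝ) + (t / s - 1) = t / s := by ring
    rw [h1, Real.div_rpow ht hs] at hb
    -- multiply by s^p
    have hsp : (0:ℝ) < s ^ p := Real.rpow_pos_of_pos hs' p
    have hb2 : s ^ p * (1 + p * (t / s - 1)) ≤ t ^ p := by
      rw [mul_comm]
      calc (1 + p * (t / s - 1)) * s ^ p ≤ t ^ p / s ^ p * s ^ p :=
            mul_le_mul_of_nonneg_right hb hsp.le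
        _ = t ^ p := div_mul_cancel₀ _ hsp.ne'
    have e2 : s ^ p = s ^ (p - 2) * s ^ (2:ℕ) := by
      rw [show p = (p - 2) + 2 by ring, Real.rpow_add hs']
      norm_num
    have key : s ^ p * (1 + p * (t / s - 1)) = s ^ p + p * (s ^ (p - 2) * (s * t - s ^ 2)) := by
      rw [e2]
      field_simp
    rw [key] at hb2
    linarith

/-- Tangent (first-order convexity) inequality for `‖·‖^p`. -/
lemma tangent_aux {n : ℕ} (p : ℝ) (hp : 2 ≤ p) (a b : EuclideanSpace ℝ (Fin n)) :
    ‖a‖ ^ p + p * ⟪‖a‖ ^ (p - 2) • a, b - a⟫ ≤ ‖b‖ ^ p := by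
  have hp0 : (0:ℝ) < p := by linarith
  have h1 : ⟪‖a‖ ^ (p - 2) • a, b - a⟫ = ‖a‖ ^ (p - 2) * (⟪a, b⟫ - ‖a‖ ^ 2) := by
    rw [real_inner_smul_left, inner_sub_right, real_inner_self_eq_norm_sq]
  rw [h1]
  have hcs : ⟪a, b⟫ ≤ ‖a‖ * ‖b‖ := real_inner_le_norm a b
  have hnn : (0:ℝ) ≤ ‖a‖ ^ (p - 2) := Real.rpow_nonneg (norm_nonneg a) _
  have h2 : p * (‖a‖ ^ (p - 2) * (⟪a, b⟫ - ‖a‖ ^ 2)) ≤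
      p * (‖a‖ ^ (p - 2) * (‖a‖ * ‖b‖ - ‖a‖ ^ 2)) := by
    apply mul_le_mul_of_nonneg_left _ hp0.le
    apply mul_le_mul_of_nonneg_left _ hnn
    linarith
  have h3 := scalar_tangent_aux p ‖a‖ ‖b‖ hp (norm_nonneg a) (norm_nonneg b)
  linarith

/-- Clarkson-type midpoint inequality in an inner product space for `p ≥ 2`. -/
lemma clarkson_aux {n : ℕ} (p : ℝ) (hp : 2 ≤ p) (a b : EuclideanSpace ℝ (Fin n)) :
    ‖(2:ℝ)⁻¹ • (a + b)‖ ^ p + ‖(2:ℝ)⁻¹ • (b - a)‖ ^ p ≤ (‖a‖ ^ p + ‖b‖ ^ p) / 2 := by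
  set x := (2:ℝ)⁻¹ • (a + b)
  set y := (2:ℝ)⁻¹ • (b - a)
  have hq : (1:ℝ) ≤ p / 2 := by linarith
  -- parallelogram: ‖x‖² + ‖y‖² = (‖a‖² + ‖b‖²)/2
  have hpar : ‖x‖ ^ (2:ℕ) + ‖y‖ ^ (2:ℕ) = (‖a‖ ^ (2:ℕ) + ‖b‖ ^ (2:ℕ)) / 2 := by
    have hx : ‖x‖ = 2⁻¹ * ‖a + b‖ := by
      rw [norm_smul]; norm_num
    have hy : ‖y‖ = 2⁻¹ * ‖b - a‖ := by
      rw [norm_smul]; norm_num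
    have h1 : ‖a + b‖ ^ 2 = ‖a‖ ^ 2 + 2 * ⟪a, b⟫ + ‖b‖ ^ 2 := norm_add_sq_real a b
    have h2 : ‖b - a‖ ^ 2 = ‖b‖ ^ 2 - 2 * ⟪b, a⟫ + ‖a‖ ^ 2 := norm_sub_sq_real b a
    have h3 : ⟪a, b⟫ = ⟪b, a⟫ := (real_inner_comm b a)
    rw [hx, hy]
    nlinarith [h1, h2, h3]
  -- convert `‖v‖^p` to `(‖v‖²)^(p/2)`
  have key : ∀ v : EuclideanSpace ℝ (Fin n), ‖v‖ ^ p = (‖v‖ ^ (2:ℕ)) ^ (p / 2) := by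
    intro v
    rw [← Real.rpow_natCast ‖v‖ 2, ← Real.rpow_mul (norm_nonneg v)]
    congr 1
    ring
  rw [key x, key y, key a, key b]
  have hx2 : (0:ℝ) ≤ ‖x‖ ^ (2:ℕ) := by positivity
  have hy2 : (0:ℝ) ≤ ‖y‖ ^ (2:ℕ) := by positivity
  -- step 1: u^q + v^q ≤ (u+v)^q
  have step1 : (‖x‖ ^ (2:ℕ)) ^ (p/2) + (‖y‖ ^ (2:ℕ)) ^ (p/2) ≤
      (‖x‖ ^ (2:ℕ) + ‖y‖ ^ (2:ℕ)) ^ (p/2) := by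
    lift (‖x‖ ^ (2:ℕ)) to NNReal using hx2 with u hu
    lift (‖y‖ ^ (2:ℕ)) to NNReal using hy2 with v hv
    have := NNReal.add_rpow_le_rpow_add u v hq
    exact_mod_cast this
  rw [hpar] at step1
  -- step 2: ((A+B)/2)^q ≤ (A^q + B^q)/2 by convexity of rpow
  have step2 : ((‖a‖ ^ (2:ℕ) + ‖b‖ ^ (2:ℕ)) / 2) ^ (p/2) ≤
      ((‖a‖ ^ (2:ℕ)) ^ (p/2) + (‖b‖ ^ (2:ℕ)) ^ (p/2)) / 2 := by
    have hc := (convexOn_rpow hq).2 (x := ‖a‖ ^ (2:ℕ)) (y := ‖b‖ ^ (2:ℕ))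
      (Set.mem_Ici.mpr (by positivity))
      (Set.mem_Ici.mpr (by positivity))
      (by norm_num : (0:ℝ) ≤ 1/2) (by norm_num : (0:ℝ) ≤ 1/2) (by norm_num)
    simp only [smul_eq_mul] at hc
    calc ((‖a‖ ^ (2:ℕ) + ‖b‖ ^ (2:ℕ)) / 2) ^ (p/2)
        = (1/2 * ‖a‖ ^ (2:ℕ) + 1/2 * ‖b‖ ^ (2:ℕ)) ^ (p/2) := by ring_nf
      _ ≤ 1/2 * (‖a‖ ^ (2:ℕ)) ^ (p/2) + 1/2 * (‖b‖ ^ (2:ℕ)) ^ (p/2) := hc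
      _ = ((‖a‖ ^ (2:ℕ)) ^ (p/2) + (‖b‖ ^ (2:ℕ)) ^ (p/2)) / 2 := by ring
  linarith

/-- Vector inequality (A2): for `p ≥ 2` there is a constant `c(p) ∈ (0,1]` with
`|b|^p ≥ |a|^p + p ⟨|a|^{p-2} a, b - a⟩ + c(p) |b-a|^p` for all `a, b ∈ ℝⁿ`. -/
theorem vector_inequality_A2 {n : ℕ} (p : ℝ) (hp : 2 ≤ p) :
    ∃ c ∈ Set.Ioc (0 : ℝ) 1, ∀ a b : EuclideanSpace ℝ (Fin n),
      ‖a‖ ^ p + p * ⟪‖a‖ ^ (p - 2) • a, b - a⟫ + c * ‖b - a‖ ^ p ≤ ‖b‖ ^ p := by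
  refine ⟨(2:ℝ) ^ (1 - p), ⟨Real.rpow_pos_of_pos two_pos _, ?_⟩, ?_⟩
  · exact Real.rpow_le_one_of_one_le_of_nonpos one_le_two (by linarith)
  intro a b
  set m := (2:ℝ)⁻¹ • (a + b) with hm
  have hma : m - a = (2:ℝ)⁻¹ • (b - a) := by
    rw [hm]; module
  have hT := tangent_aux p hp a m
  rw [hma, real_inner_smul_right] at hT
  have hK := clarkson_aux p hp a b
  rw [← hm] at hK
  have hnorm : ‖(2:ℝ)⁻¹ • (b - a)‖ ^ p = (2:ℝ)⁻¹ ^ p * ‖b - a‖ ^ p := by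
    rw [norm_smul, Real.mul_rpow (by positivity) (norm_nonneg _)]
    norm_num
  rw [hnorm] at hK
  have hc : (2:ℝ) ^ (1 - p) = 2 * (2:ℝ)⁻¹ ^ p := by
    have h1 : (2:ℝ) ^ (1 - p) = 2 ^ (1:ℝ) * 2 ^ (-p) := by
      rw [← Real.rpow_add (by norm_num : (0:ℝ) < 2)]; ring_nf
    rw [h1, Real.rpow_one, Real.rpow_neg (by norm_num : (0:ℝ) ≤ 2),
      Real.inv_rpow (by norm_num : (0:ℝ) ≤ 2)]
  rw [hc]
  -- hT : ‖a‖^p + p * (2⁻¹ * ⟪g, b-a⟫) ≤ ‖m‖^p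
  -- hK : ‖m‖^p + 2⁻¹^p * ‖b-a‖^p ≤ (‖a‖^p + ‖b‖^p)/2
  linarith
end

section
/- Let p ≥ 2 and let c(p) ∈ (0,1] be the constant from the vector inequality |b|^p ≥ |a|^p + p⟨|a|^{p−2}a, b−a⟩ + c(p)|b−a|^p. Let u* : Ω̄ → ℝ be a C² function with div(|∇u*|^{p−2}∇u*) = 0 in Ω, and let v : Ω̄ → ℝ be a C¹ function with v = u* on ∂Ω. Then c(p)·∫_Ω |∇v(x) − ∇u*(x)|^p dx ≤ ∫_Ω ( |∇v(x)|^p − |∇u*(x)|^p ) dx. -/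
open MeasureTheory Real Set Filter
open scoped Topology RealInnerProductSpace

noncomputable section

/-- Divergence (in the spatial variables) of a vector field on Euclidean space. -/
def vdiv {n : ℕ} (V : EuclideanSpace ℝ (Fin n) → EuclideanSpace ℝ (Fin n))
    (x : EuclideanSpace ℝ (Fin n)) : ℝ :=
  ∑ i, fderiv ℝ V x (EuclideanSpace.single i 1) i

/-- The `p`-Laplacian `Δ_p f = div (|∇f|^{p-2} ∇f)`. -/
def pLap {n : ℕ} (p : ℝ) (f : EuclideanSpace ℝ (Fin n) → ℝ)
    (x : EuclideanSpace ℝ (Fin n)) : ℝ :=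
  vdiv (fun y => ‖gradient f y‖ ^ (p - 2) • gradient f y) x

/-- First time derivative `u_t`. -/
def ut {n : ℕ} (u : ℝ → EuclideanSpace ℝ (Fin n) → ℝ) (t : ℝ)
    (x : EuclideanSpace ℝ (Fin n)) : ℝ :=
  deriv (fun s => u s x) t

/-- Second time derivative `u_tt`. -/
def utt {n : ℕ} (u : ℝ → EuclideanSpace ℝ (Fin n) → ℝ) (t : ℝ)
    (x : EuclideanSpace ℝ (Fin n)) : ℝ :=
  deriv (fun s => ut u s x) t

/-- A classical solution of the damped `p`-Laplace equation
`u_tt + a u_t = Δ_p u` on `[0,∞) × Ω̄` with initial data `u₀`, zero initial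
velocity and boundary data `g`. -/
structure IsDampedSolution {n : ℕ} (p a : ℝ) (Ω : Set (EuclideanSpace ℝ (Fin n)))
    (g u₀ : EuclideanSpace ℝ (Fin n) → ℝ)
    (u : ℝ → EuclideanSpace ℝ (Fin n) → ℝ) : Prop where
  smooth : ContDiffOn ℝ 2 (fun q : ℝ × EuclideanSpace ℝ (Fin n) => u q.1 q.2)
      (Ici (0 : ℝ) ×ˢ closure Ω)
  pde : ∀ t > (0 : ℝ), ∀ x ∈ Ω, utt u t x + a * ut u t x = pLap p (u t) x
  init : ∀ x ∈ Ω, u 0 x = u₀ x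
  init_vel : ∀ x ∈ Ω, ut u 0 x = 0
  bdry : ∀ t ≥ (0 : ℝ), ∀ x ∈ frontier Ω, u t x = g x

/-- The stationary solution: a `p`-harmonic function with boundary data `g`. -/
structure IsStationarySolution {n : ℕ} (p : ℝ) (Ω : Set (EuclideanSpace ℝ (Fin n)))
    (g ustar : EuclideanSpace ℝ (Fin n) → ℝ) : Prop where
  smooth : ContDiffOn ℝ 2 ustar (closure Ω)
  pharmonic : ∀ x ∈ Ω, pLap p ustar x = 0
  bdry : ∀ x ∈ frontier Ω, ustar x = g x

open Metric Bornology
open scoped ENNReal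

/-!
Testing `div (|∇u*|^{p-2} ∇u*) = 0` against `w = v - u*`, which vanishes on `∂Ω`, gives
`∫_Ω ⟨|∇u*|^{p-2} ∇u*, ∇v - ∇u*⟩ = 0`; integrating the vector inequality with `a = ∇u*`,
`b = ∇v` then gives the claim.

Since `∂Ω` carries no regularity, the test is done with `Ψ_ε ∘ w`, where `Ψ_ε` is a `C¹`
function vanishing on `[-ε, ε]`: extended by zero, `(Ψ_ε ∘ w) |∇u*|^{p-2} ∇u*` is a compactly
supported differentiable field on `ℝⁿ`, whose divergence integrates to zero by the divergence
theorem on a large box. As `ε → 0`, `Ψ_ε' → 1` off `0`, and dominated convergence concludes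
because `∇w = 0` almost everywhere on `{w = 0}` (every density point of a level set is a
critical point).
-/

section ClosureBounds

variable {𝕜 E F : Type*} [NontriviallyNormedField 𝕜] [NormedAddCommGroup E] [NormedSpace 𝕜 E]
  [NormedAddCommGroup F] [NormedSpace 𝕜 F] {s : Set E} {f : E → F}

theorem ContDiffOn.isBounded_image_fderiv (hs : IsOpen s) (hsc : IsCompact (closure s))
    (hf : ContDiffOn 𝕜 1 f (closure s)) : IsBounded (fderiv 𝕜 f '' s) := by
  suffices ∃ C, ∀ x ∈ closure s ∩ s, ‖fderiv 𝕜 f x‖ ≤ C by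
    obtain ⟨C, hC⟩ := this
    exact isBounded_iff_forall_norm_le.2
      ⟨C, forall_mem_image.2 fun x hx => hC x ⟨subset_closure hx, hx⟩⟩
  refine hsc.induction_on (p := fun t => ∃ C, ∀ x ∈ t ∩ s, ‖fderiv 𝕜 f x‖ ≤ C) ⟨0, by simp⟩
    (fun t t' htt' ⟨C, hC⟩ => ⟨C, fun x hx => hC x ⟨htt' hx.1, hx.2⟩⟩)
    (fun t t' ⟨C, hC⟩ ⟨C', hC'⟩ => ⟨max C C', fun x hx => hx.1.elim
      (fun h => (hC x ⟨h, hx.2⟩).trans (le_max_left _ _))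
      (fun h => (hC' x ⟨h, hx.2⟩).trans (le_max_right _ _))⟩) ?_
  intro x hx
  obtain ⟨u, hu, -, f', hf', hf'c⟩ :=
    (contDiffWithinAt_succ_iff_hasFDerivWithinAt (n := 0) (by simp)).1 (by simpa using hf x hx)
  rw [insert_eq_of_mem hx] at hu
  have hbound : ∀ᶠ y in 𝓝[closure s] x, ‖f' y‖ < ‖f' x‖ + 1 :=
    nhdsWithin_le_of_mem hu
      (hf'c.continuousWithinAt.norm.eventually (gt_mem_nhds (lt_add_one _)))
  -- near `x`, points of the open set `s` are interior to `u`, where `f' y` is the derivative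
  have hnhds : ∀ᶠ y in 𝓝[closure s] x, y ∈ s → u ∈ 𝓝 y := by
    filter_upwards [eventually_eventually_nhdsWithin.2 hu] with y hy hys
    rwa [nhdsWithin_eq_nhds.2 (mem_of_superset (hs.mem_nhds hys) subset_closure)] at hy
  refine ⟨_, hbound.and hnhds, ‖f' x‖ + 1, fun y ⟨⟨hy, hyu⟩, hys⟩ => ?_⟩
  rw [((hf' y (mem_of_mem_nhds (hyu hys))).hasFDerivAt (hyu hys)).fderiv]
  exact hy.le

end ClosureBounds

section LevelSet

variable {E F : Type*} [NormedAddCommGroup E] [NormedSpace ℝ E] [FiniteDimensional ℝ E]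
  [MeasurableSpace E] [BorelSpace E] [NormedAddCommGroup F] [NormedSpace ℝ F]
  (μ : Measure E) [μ.IsAddHaarMeasure] {f : E → F} {s : Set E} {c : F}

theorem fderiv_eq_zero_of_density_one (hf : ∀ y ∈ s, f y = c) {x : E} (hxs : x ∈ s)
    (hd : DifferentiableAt ℝ f x)
    (hx : Tendsto (fun r => μ (s ∩ closedBall x r) / μ (closedBall x r)) (𝓝[>] 0) (𝓝 1)) :
    fderiv ℝ f x = 0 := by
  by_contra hL
  set L := fderiv ℝ f x
  obtain ⟨u, hu⟩ : ∃ u, L u ≠ 0 := by simpa [DFunLike.ne_iff] using hL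
  set a := ‖L u‖
  set R := ‖u‖ + 1
  have ha : 0 < a := norm_pos_iff.2 hu
  have hR : 0 < R := by positivity
  -- the density point `x` sees points of `s` in `x + r • t` for all small `r`, but `L` is too
  -- large on `t` for `f` to stay constant there
  set t : Set E := {z | ‖z‖ < R ∧ a / 2 < ‖L z‖}
  have ht : IsOpen t := (isOpen_lt continuous_norm continuous_const).inter
    (isOpen_lt continuous_const (L.continuous.norm))
  have hut : u ∈ t := ⟨lt_add_one _, half_lt_self ha⟩
  have hη : 0 < a / (2 * R) := by positivity
  obtain ⟨δ, hδ, hball⟩ := Metric.eventually_nhds_iff_ball.1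
    ((Asymptotics.isLittleO_iff.1 hd.hasFDerivAt.isLittleO) hη)
  obtain ⟨r, ⟨y, ⟨hys, hy⟩⟩, hr, hrδ⟩ :=
    ((Measure.eventually_nonempty_inter_smul_of_density_one μ s x hx t ht.measurableSet
      (ht.measure_pos μ ⟨u, hut⟩).ne').and
      (Ioo_mem_nhdsGT (show 0 < δ / R by positivity))).exists
  obtain ⟨z, ⟨hzR, hzL⟩, hz⟩ : ∃ z ∈ t, r • z = -x + y := by
    simpa [Set.singleton_add, mem_smul_set] using hy
  obtain rfl : y = x + r • z := by rw [hz]; abel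
  have hrz : ‖r • z‖ < δ := by
    rw [norm_smul, Real.norm_of_nonneg hr.le]
    calc r * ‖z‖ ≤ r * R := by gcongr
      _ < δ := (lt_div_iff₀ (by positivity)).1 hrδ
  have key := hball (x + r • z) (by simpa [dist_eq_norm] using hrz)
  simp only [hf _ hys, hf x hxs, sub_self, zero_sub, norm_neg, add_sub_cancel_left,
    map_smul, norm_smul, Real.norm_of_nonneg hr.le] at key
  have : a / (2 * R) * (r * ‖z‖) < r * (a / 2) := by
    rw [show r * (a / 2) = a / (2 * R) * (r * R) by field_simp]
    gcongr
  linarith [mul_lt_mul_of_pos_left hzL hr]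

theorem ae_fderiv_eq_zero_of_forall_eq (hf : ∀ y ∈ s, f y = c) :
    ∀ᵐ x ∂μ, x ∈ s → DifferentiableAt ℝ f x → fderiv ℝ f x = 0 := by
  filter_upwards [ae_imp_of_ae_restrict (Besicovitch.ae_tendsto_measure_inter_div μ s)]
    with x hx hxs hd
  exact fderiv_eq_zero_of_density_one μ hf hxs hd (hx hxs)

end LevelSet

section Gradient

variable {E : Type*} [NormedAddCommGroup E] [InnerProductSpace ℝ E] [CompleteSpace E]
  {f : E → ℝ} {s : Set E}

theorem norm_gradient_eq_norm_fderiv (f : E → ℝ) (x : E) : ‖gradient f x‖ = ‖fderiv ℝ f x‖ :=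
  (InnerProductSpace.toDual ℝ E).symm.norm_map _

theorem ContDiffOn.continuousOn_gradient_of_isOpen (hf : ContDiffOn ℝ 1 f s) (hs : IsOpen s) :
    ContinuousOn (gradient f) s :=
  (InnerProductSpace.toDual ℝ E).symm.continuous.comp_continuousOn
    (hf.continuousOn_fderiv_of_isOpen hs le_rfl)

theorem ContDiffOn.isBounded_image_gradient (hs : IsOpen s) (hsc : IsCompact (closure s))
    (hf : ContDiffOn ℝ 1 f (closure s)) : IsBounded (gradient f '' s) := by
  obtain ⟨C, hC⟩ := isBounded_iff_forall_norm_le.1 (hf.isBounded_image_fderiv hs hsc)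
  exact isBounded_iff_forall_norm_le.2 ⟨C, forall_mem_image.2 fun x hx =>
    (norm_gradient_eq_norm_fderiv f x).trans_le (hC _ (mem_image_of_mem _ hx))⟩

theorem ContDiffAt.differentiableAt_gradient {x : E} (hf : ContDiffAt ℝ 2 f x) :
    DifferentiableAt ℝ (gradient f) x :=
  (InnerProductSpace.toDual ℝ E).symm.differentiableAt.comp x
    ((hf.fderiv_right (m := 1) (by norm_num)).differentiableAt one_ne_zero)

end Gradient

theorem Bornology.IsBounded.image_of_continuous {X Y : Type*} [PseudoMetricSpace X]
    [ProperSpace X] [PseudoMetricSpace Y] {s : Set X} (hs : IsBounded s) {Φ : X → Y}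
    (hΦ : Continuous Φ) : IsBounded (Φ '' s) :=
  (hs.isCompact_closure.image hΦ).isBounded.subset (image_mono subset_closure)

theorem integrableOn_comp_of_isBounded_image {n : ℕ} {X : Type*} [PseudoMetricSpace X]
    [ProperSpace X] {Ω : Set (EuclideanSpace ℝ (Fin n))} (hΩ : IsOpen Ω) (hΩb : IsBounded Ω)
    {g : EuclideanSpace ℝ (Fin n) → X} (hg : ContinuousOn g Ω) (hgb : IsBounded (g '' Ω))
    {Φ : X → ℝ} (hΦ : Continuous Φ) : IntegrableOn (fun x => Φ (g x)) Ω := by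
  obtain ⟨C, hC⟩ := isBounded_iff_forall_norm_le.1 (hgb.image_of_continuous hΦ)
  exact .of_bound hΩb.measure_lt_top ((hΦ.comp_continuousOn hg).aestronglyMeasurable
    hΩ.measurableSet) C (ae_restrict_of_forall_mem hΩ.measurableSet fun x hx =>
      hC _ (mem_image_of_mem Φ (mem_image_of_mem g hx)))

section NormRpowSmul

variable {E V : Type*} [NormedAddCommGroup E] [NormedSpace ℝ E] [NormedAddCommGroup V]
  [InnerProductSpace ℝ V] {g : E → V} {x : E} {q : ℝ}

theorem DifferentiableAt.norm_rpow_smul (hg : DifferentiableAt ℝ g x) (hq : 0 ≤ q) :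
    DifferentiableAt ℝ (fun y => ‖g y‖ ^ q • g y) x := by
  by_cases hgx : g x = 0
  · rcases hq.eq_or_lt with rfl | hq
    · simpa using hg
    -- `‖g y‖ ^ q → 0` while `g y = O(y - x)`, so the map is `o(y - x)`
    have hsmall : (fun y => ‖g y‖ ^ q) =o[𝓝 x] (fun _ => (1 : ℝ)) := by
      refine (Asymptotics.isLittleO_one_iff ℝ).2 ?_
      simpa [hgx, Real.zero_rpow hq.ne'] using
        (hg.continuousAt.norm.rpow_const (Or.inr hq.le)).tendsto
    have hlin : g =O[𝓝 x] (· - x) := by simpa [hgx] using hg.hasFDerivAt.isBigO_sub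
    refine (HasFDerivAt.differentiableAt (f' := 0) (hasFDerivAt_iff_isLittleO.2 ?_))
    simpa [hgx] using hsmall.smul_isBigO hlin
  · exact ((hg.norm ℝ hgx).rpow_const (Or.inl (norm_ne_zero_iff.2 hgx))).smul hg

end NormRpowSmul

section DivergenceTheorem

variable {n : ℕ}

local notation "𝔼" => EuclideanSpace ℝ (Fin n)

theorem EuclideanSpace.sum_apply_single_mul (ℓ : 𝔼 →L[ℝ] ℝ) (z : 𝔼) :
    ∑ i, ℓ (EuclideanSpace.single i 1) * z i = ℓ z := by
  conv_rhs => rw [← (EuclideanSpace.basisFun (Fin n) ℝ).sum_repr z]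
  simp [map_sum, mul_comm]

theorem vdiv_smul {a : 𝔼 → ℝ} {F : 𝔼 → 𝔼} {x : 𝔼} (ha : DifferentiableAt ℝ a x)
    (hF : DifferentiableAt ℝ F x) :
    vdiv (fun y => a y • F y) x = a x * vdiv F x + fderiv ℝ a x (F x) := by
  simp only [vdiv, fderiv_fun_smul ha hF, add_apply,
    smul_apply, ContinuousLinearMap.smulRight_apply, PiLp.add_apply,
    PiLp.smul_apply, smul_eq_mul, Finset.sum_add_distrib, ← Finset.mul_sum,
    EuclideanSpace.sum_apply_single_mul]

theorem integral_vdiv_eq_zero {G : 𝔼 → 𝔼} (hG : Differentiable ℝ G) (hGc : HasCompactSupport G)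
    (hi : Integrable (vdiv G)) : ∫ x, vdiv G x = 0 := by
  obtain _ | m := n
  · simp [vdiv]
  obtain ⟨R, hR0, hR⟩ := hGc.isCompact.isBounded.subset_closedBall_lt 0 0
  set e := EuclideanSpace.equiv (Fin (m + 1)) ℝ
  have hvol := (EuclideanSpace.volume_preserving_symm_measurableEquiv_toLp (Fin (m + 1))).symm
  have hcoord : ∀ y, e.symm y ∈ tsupport G → ∀ i, |y i| ≤ R := fun y hy i =>
    (PiLp.norm_apply_le (e.symm y) i).trans (mem_closedBall_zero_iff.1 (hR hy))
  -- the field in the coordinates of `Fin (m + 1) → ℝ`, on the box `[-(R + 1), R + 1]ⁿ⁺¹`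
  set f : Fin (m + 1) → (Fin (m + 1) → ℝ) → ℝ := fun i y => G (e.symm y) i
  set f' : Fin (m + 1) → (Fin (m + 1) → ℝ) → (Fin (m + 1) → ℝ) →L[ℝ] ℝ := fun i y =>
    (EuclideanSpace.proj i).comp ((fderiv ℝ G (e.symm y)).comp e.symm.toContinuousLinearMap)
  set a : Fin (m + 1) → ℝ := fun _ => -(R + 1)
  set b : Fin (m + 1) → ℝ := fun _ => R + 1
  have hdiv : ∀ y, ∑ i, f' i y (Pi.single i 1) = vdiv G (e.symm y) := fun y => rfl
  have hbox := integral_divergence_of_hasFDerivAt_off_countable' a b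
    (fun i => by simp only [a, b]; linarith) f f' ∅ countable_empty
    (fun i => ((EuclideanSpace.proj i).continuous.comp
      (hG.continuous.comp e.symm.continuous)).continuousOn)
    (fun y _ i => (EuclideanSpace.proj i : EuclideanSpace ℝ (Fin (m + 1)) →L[ℝ] ℝ).hasFDerivAt.comp
      y ((hG _).hasFDerivAt.comp y e.symm.hasFDerivAt))
    (by simp only [hdiv]; exact ((hvol.integrable_comp_emb
      (MeasurableEquiv.toLp 2 _).symm.symm.measurableEmbedding).2 hi).integrableOn)
  have hface : ∀ i (t : ℝ), |t| = R + 1 → ∀ z, f i (i.insertNth t z) = 0 := fun i t ht z => by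
    have : e.symm (i.insertNth t z) ∉ tsupport G := fun h => by
      have := hcoord _ h i
      simp only [Fin.insertNth_apply_same, ht] at this
      linarith
    simp [f, image_eq_zero_of_notMem_tsupport this]
  have houtside : ∀ y ∉ Icc a b, vdiv G (e.symm y) = 0 := fun y hy => by
    by_contra h
    have hy' : e.symm y ∈ tsupport G := support_fderiv_subset ℝ fun h' => h (by simp [vdiv, h'])
    refine hy ⟨fun i => ?_, fun i => ?_⟩ <;>
      simp only [a, b] <;> linarith [abs_le.1 (hcoord y hy' i)]
  calc ∫ x, vdiv G x = ∫ y, vdiv G (e.symm y) := (hvol.integral_comp' (vdiv G)).symm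
    _ = ∫ y in Icc a b, ∑ i, f' i y (Pi.single i 1) := by
      simp only [hdiv]; exact (setIntegral_eq_integral_of_forall_compl_eq_zero houtside).symm
    _ = 0 := by
      rw [hbox]
      refine Finset.sum_eq_zero fun i _ => ?_
      have hRabs : |R + 1| = R + 1 := abs_of_pos (by linarith)
      simp only [a, b, hface i (R + 1) hRabs, hface i (-(R + 1)) (by rw [abs_neg, hRabs]),
        integral_zero, sub_self]

end DivergenceTheorem

section Cutoff

def cutoff (ε t : ℝ) : ℝ := Real.smoothTransition ((|t| - ε) / ε)

def cutoffPrimitive (ε t : ℝ) : ℝ := ∫ s in (0 : ℝ)..t, cutoff ε s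

variable {ε t : ℝ}

theorem continuous_cutoff (ε : ℝ) : Continuous (cutoff ε) :=
  Real.smoothTransition.continuous.comp ((continuous_abs.sub continuous_const).div_const ε)

theorem abs_cutoff_le_one : |cutoff ε t| ≤ 1 := by
  rw [cutoff, abs_of_nonneg (Real.smoothTransition.nonneg _)]
  exact Real.smoothTransition.le_one _

theorem cutoff_eq_zero (hε : 0 < ε) (ht : |t| ≤ ε) : cutoff ε t = 0 :=
  Real.smoothTransition.zero_of_nonpos (div_nonpos_of_nonpos_of_nonneg (by linarith) hε.le)

theorem cutoff_eq_one (hε : 0 < ε) (ht : 2 * ε ≤ |t|) : cutoff ε t = 1 :=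
  Real.smoothTransition.one_of_one_le ((one_le_div hε).2 (by linarith))

theorem tendsto_cutoff (ht : t ≠ 0) : Tendsto (fun ε => cutoff ε t) (𝓝[>] 0) (𝓝 1) := by
  refine tendsto_const_nhds.congr' ?_
  filter_upwards [Ioo_mem_nhdsGT (show 0 < |t| / 2 by positivity)] with ε ⟨hε, hεt⟩
  exact (cutoff_eq_one hε (by linarith)).symm

theorem hasDerivAt_cutoffPrimitive (ε t : ℝ) : HasDerivAt (cutoffPrimitive ε) (cutoff ε t) t :=
  ((continuous_cutoff ε).integral_hasStrictDerivAt 0 t).hasDerivAt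

theorem cutoffPrimitive_eq_zero (hε : 0 < ε) (ht : |t| ≤ ε) : cutoffPrimitive ε t = 0 := by
  refine (intervalIntegral.integral_congr fun s hs => ?_).trans intervalIntegral.integral_zero
  refine cutoff_eq_zero hε (le_trans ?_ ht)
  rcases Set.mem_uIcc.1 hs with ⟨h0, ht⟩ | ⟨ht, h0⟩
  · exact abs_le_abs_of_nonneg h0 ht
  · exact abs_le_abs_of_nonpos h0 ht

theorem norm_cutoff_mul_le (ε t y : ℝ) : ‖cutoff ε t * y‖ ≤ ‖y‖ := by
  rw [norm_mul, Real.norm_eq_abs]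
  exact mul_le_of_le_one_left (norm_nonneg _) abs_cutoff_le_one

theorem tendsto_setIntegral_cutoff_mul {α : Type*} [MeasurableSpace α] {μ : Measure α}
    {s : Set α} (hs : MeasurableSet s) (hμs : μ s ≠ ∞) {w h : α → ℝ}
    (hw : AEStronglyMeasurable w (μ.restrict s)) (hh : AEStronglyMeasurable h (μ.restrict s))
    {C : ℝ} (hC : ∀ x ∈ s, ‖h x‖ ≤ C) (hzero : ∀ᵐ x ∂μ.restrict s, w x = 0 → h x = 0) :
    Tendsto (fun ε => ∫ x in s, cutoff ε (w x) * h x ∂μ) (𝓝[>] 0) (𝓝 (∫ x in s, h x ∂μ)) := by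
  refine tendsto_integral_filter_of_dominated_convergence (fun _ => C)
    (Eventually.of_forall fun ε => ((continuous_cutoff ε).comp_aestronglyMeasurable hw).mul hh)
    (Eventually.of_forall fun ε => ae_restrict_of_forall_mem hs fun x hx =>
      (norm_cutoff_mul_le _ _ _).trans (hC x hx))
    (integrableOn_const hμs) ?_
  filter_upwards [hzero] with x hx
  by_cases hwx : w x = 0
  · simp [hx hwx]
  · simpa using (tendsto_cutoff hwx).mul_const (h x)

end Cutoff

theorem eventually_abs_lt_of_eq_zero_on_frontier {X : Type*} [TopologicalSpace X] {Ω : Set X}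
    (hΩ : IsOpen Ω) {w : X → ℝ} (hw : ContinuousOn w (closure Ω))
    (hwb : ∀ x ∈ frontier Ω, w x = 0) {ε : ℝ} (hε : 0 < ε) {x : X} (hx : x ∉ Ω) :
    ∀ᶠ y in 𝓝 x, y ∈ Ω → |w y| < ε := by
  by_cases hxc : x ∈ closure Ω
  · have hwx : w x ∈ Ioo (-ε) ε := by
      rw [hwb x (hΩ.frontier_eq ▸ ⟨hxc, hx⟩)]; exact ⟨neg_neg_of_pos hε, hε⟩
    filter_upwards [eventually_nhdsWithin_iff.1 ((hw x hxc).eventually (Ioo_mem_nhds hwx.1 hwx.2))]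
      with y hy hyΩ
    exact abs_lt.2 (hy (subset_closure hyΩ))
  · filter_upwards [isClosed_closure.isOpen_compl.mem_nhds hxc] with y hy hyΩ
    exact absurd (subset_closure hyΩ) hy

section Orthogonality

variable {n : ℕ} {Ω : Set (EuclideanSpace ℝ (Fin n))}
  {F : EuclideanSpace ℝ (Fin n) → EuclideanSpace ℝ (Fin n)} {w : EuclideanSpace ℝ (Fin n) → ℝ}

theorem integral_cutoff_mul_fderiv_eq_zero (hΩ : IsOpen Ω) (hΩb : IsBounded Ω)
    (hF : ∀ x ∈ Ω, DifferentiableAt ℝ F x) (hdiv : ∀ x ∈ Ω, vdiv F x = 0)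
    (hw : ∀ x ∈ Ω, DifferentiableAt ℝ w x) (hwc : ContinuousOn w (closure Ω))
    (hwb : ∀ x ∈ frontier Ω, w x = 0) {ε : ℝ} (hε : 0 < ε)
    (hint : IntegrableOn (fun x => cutoff ε (w x) * fderiv ℝ w x (F x)) Ω) :
    ∫ x in Ω, cutoff ε (w x) * fderiv ℝ w x (F x) = 0 := by
  set G := Ω.indicator fun y => cutoffPrimitive ε (w y) • F y
  have hGΩ : ∀ x ∈ Ω, G =ᶠ[𝓝 x] fun y => cutoffPrimitive ε (w y) • F y := fun x hx =>
    eventually_of_mem (hΩ.mem_nhds hx) fun y hy => indicator_of_mem hy _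
  -- `cutoffPrimitive ε ∘ w` vanishes near `∂Ω`, so `G` is `0` near every point outside `Ω`
  have hGΩc : ∀ x ∉ Ω, G =ᶠ[𝓝 x] 0 := fun x hx => by
    filter_upwards [eventually_abs_lt_of_eq_zero_on_frontier hΩ hwc hwb hε hx] with y hy
    by_cases hyΩ : y ∈ Ω
    · simp [G, hyΩ, cutoffPrimitive_eq_zero hε (hy hyΩ).le]
    · simp [G, hyΩ]
  have hψw : ∀ x ∈ Ω, HasFDerivAt (fun y => cutoffPrimitive ε (w y))
      (cutoff ε (w x) • fderiv ℝ w x) x := fun x hx =>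
    (hasDerivAt_cutoffPrimitive ε (w x)).comp_hasFDerivAt x (hw x hx).hasFDerivAt
  have hG : Differentiable ℝ G := fun x => by
    by_cases hx : x ∈ Ω
    · exact (((hψw x hx).differentiableAt.smul (hF x hx))).congr_of_eventuallyEq (hGΩ x hx)
    · exact (differentiableAt_const (0 : EuclideanSpace ℝ (Fin n))).congr_of_eventuallyEq
        (hGΩc x hx)
  have hvdiv : vdiv G = Ω.indicator fun x => cutoff ε (w x) * fderiv ℝ w x (F x) := by
    ext x
    by_cases hx : x ∈ Ω
    · rw [indicator_of_mem hx, vdiv, (hGΩ x hx).fderiv_eq, ← vdiv,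
        vdiv_smul (hψw x hx).differentiableAt (hF x hx), hdiv x hx, (hψw x hx).fderiv]
      simp
    · simp [indicator_of_notMem hx, vdiv, (hGΩc x hx).fderiv_eq]
  have hGc : HasCompactSupport G := HasCompactSupport.intro hΩb.isCompact_closure
    fun x hx => indicator_of_notMem (fun h => hx (subset_closure h)) _
  have := integral_vdiv_eq_zero hG hGc (hvdiv ▸ hint.integrable_indicator hΩ.measurableSet)
  rwa [hvdiv, integral_indicator hΩ.measurableSet] at this

theorem integral_fderiv_apply_eq_zero_of_vdiv_eq_zero (hΩ : IsOpen Ω) (hΩb : IsBounded Ω)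
    (hF : ∀ x ∈ Ω, DifferentiableAt ℝ F x) (hFb : IsBounded (F '' Ω))
    (hdiv : ∀ x ∈ Ω, vdiv F x = 0) (hw : ContDiffOn ℝ 1 w (closure Ω))
    (hwb : ∀ x ∈ frontier Ω, w x = 0) :
    ∫ x in Ω, fderiv ℝ w x (F x) = 0 := by
  have hwΩ : ContDiffOn ℝ 1 w Ω := hw.mono subset_closure
  have hwd : ∀ x ∈ Ω, DifferentiableAt ℝ w x := fun x hx =>
    (hwΩ.differentiableOn one_ne_zero).differentiableAt (hΩ.mem_nhds hx)
  have hcont : ContinuousOn (fun x => fderiv ℝ w x (F x)) Ω :=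
    (hwΩ.continuousOn_fderiv_of_isOpen hΩ le_rfl).clm_apply
      fun x hx => (hF x hx).continuousAt.continuousWithinAt
  obtain ⟨C₁, hC₁⟩ := isBounded_iff_forall_norm_le.1
    (hw.isBounded_image_fderiv hΩ hΩb.isCompact_closure)
  obtain ⟨C₂, hC₂⟩ := isBounded_iff_forall_norm_le.1 hFb
  have hbound : ∀ x ∈ Ω, ‖fderiv ℝ w x (F x)‖ ≤ C₁ * C₂ := fun x hx =>
    ((fderiv ℝ w x).le_opNorm _).trans (mul_le_mul (hC₁ _ (mem_image_of_mem _ hx))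
      (hC₂ _ (mem_image_of_mem _ hx)) (norm_nonneg _)
      ((norm_nonneg _).trans (hC₁ _ (mem_image_of_mem _ hx))))
  have hwm : AEStronglyMeasurable w (volume.restrict Ω) :=
    hwΩ.continuousOn.aestronglyMeasurable hΩ.measurableSet
  have hzero : ∀ᵐ x ∂volume.restrict Ω, w x = 0 → fderiv ℝ w x (F x) = 0 := by
    filter_upwards [ae_restrict_mem hΩ.measurableSet, ae_restrict_of_ae
      (ae_fderiv_eq_zero_of_forall_eq volume (s := w ⁻¹' {0}) fun y hy => hy)]
      with x hx hx0 hwx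
    simp [hx0 hwx (hwd x hx)]
  refine tendsto_nhds_unique (tendsto_setIntegral_cutoff_mul hΩ.measurableSet
    hΩb.measure_lt_top.ne hwm (hcont.aestronglyMeasurable hΩ.measurableSet) hbound hzero)
    (tendsto_const_nhds.congr' ?_)
  filter_upwards [self_mem_nhdsWithin] with ε hε
  refine (integral_cutoff_mul_fderiv_eq_zero hΩ hΩb hF hdiv hwd hw.continuousOn hwb hε
    (.of_bound hΩb.measure_lt_top (((continuous_cutoff ε).comp_aestronglyMeasurable hwm).mul
      (hcont.aestronglyMeasurable hΩ.measurableSet)) (C₁ * C₂)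
      (ae_restrict_of_forall_mem hΩ.measurableSet fun x hx => ?_))).symm
  exact (norm_cutoff_mul_le _ _ _).trans (hbound x hx)

end Orthogonality

theorem setIntegral_inner_gradient_sub_eq_zero_of_pLap_eq_zero {n : ℕ} {p : ℝ} (hp : 2 ≤ p)
    {Ω : Set (EuclideanSpace ℝ (Fin n))} (hΩ : IsOpen Ω) (hΩb : IsBounded Ω)
    {ustar v : EuclideanSpace ℝ (Fin n) → ℝ} (hustar : ContDiffOn ℝ 2 ustar (closure Ω))
    (hpharm : ∀ x ∈ Ω, pLap p ustar x = 0) (hv : ContDiffOn ℝ 1 v (closure Ω))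
    (hvb : ∀ x ∈ frontier Ω, v x = ustar x) :
    ∫ x in Ω, ⟪‖gradient ustar x‖ ^ (p - 2) • gradient ustar x,
      gradient v x - gradient ustar x⟫ = 0 := by
  have hu : ContDiffOn ℝ 1 ustar (closure Ω) := hustar.of_le one_le_two
  set F := fun y => ‖gradient ustar y‖ ^ (p - 2) • gradient ustar y
  have hF : ∀ x ∈ Ω, DifferentiableAt ℝ F x := fun x hx =>
    (hustar.contDiffAt (mem_of_superset (hΩ.mem_nhds hx) subset_closure)).differentiableAt_gradient
      |>.norm_rpow_smul (by linarith)
  have hFb : IsBounded (F '' Ω) := by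
    simpa [image_image] using (hu.isBounded_image_gradient hΩ hΩb.isCompact_closure)
      |>.image_of_continuous (Φ := fun a => ‖a‖ ^ (p - 2) • a) (by fun_prop (disch := linarith))
  rw [← integral_fderiv_apply_eq_zero_of_vdiv_eq_zero hΩ hΩb hF hFb hpharm (hv.sub hu)
    fun x hx => sub_eq_zero.2 (hvb x hx)]
  refine setIntegral_congr_fun hΩ.measurableSet fun x hx => ?_
  have hΩx := mem_of_superset (hΩ.mem_nhds hx) subset_closure
  rw [fderiv_fun_sub ((hv.differentiableOn one_ne_zero).differentiableAt hΩx)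
    ((hu.differentiableOn one_ne_zero).differentiableAt hΩx)]
  simp [F, inner_sub_right, mul_sub]

theorem pharmonic_quantitative_minimality_general {n : ℕ} (p c : ℝ) (hp : 2 ≤ p)
    (hA2 : ∀ a b : EuclideanSpace ℝ (Fin n),
      ‖a‖ ^ p + p * ⟪‖a‖ ^ (p - 2) • a, b - a⟫ + c * ‖b - a‖ ^ p ≤ ‖b‖ ^ p)
    (Ω : Set (EuclideanSpace ℝ (Fin n))) (hΩo : IsOpen Ω) (hΩb : Bornology.IsBounded Ω)
    (ustar v : EuclideanSpace ℝ (Fin n) → ℝ)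
    (hustar : ContDiffOn ℝ 2 ustar (closure Ω))
    (hpharm : ∀ x ∈ Ω, pLap p ustar x = 0)
    (hv : ContDiffOn ℝ 1 v (closure Ω))
    (hvb : ∀ x ∈ frontier Ω, v x = ustar x) :
    c * ∫ x in Ω, ‖gradient v x - gradient ustar x‖ ^ p
      ≤ ∫ x in Ω, (‖gradient v x‖ ^ p - ‖gradient ustar x‖ ^ p) := by
  have hu : ContDiffOn ℝ 1 ustar (closure Ω) := hustar.of_le one_le_two
  have hΩc := hΩb.isCompact_closure
  set g := fun x => (gradient v x, gradient ustar x)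
  have hg : ContinuousOn g Ω :=
    ((hv.mono subset_closure).continuousOn_gradient_of_isOpen hΩo).prodMk
      ((hu.mono subset_closure).continuousOn_gradient_of_isOpen hΩo)
  have hgb : IsBounded (g '' Ω) := ((hv.isBounded_image_gradient hΩo hΩc).prod
    (hu.isBounded_image_gradient hΩo hΩc)).subset image_prodMk_subset_prod
  have hI₁ := integrableOn_comp_of_isBounded_image hΩo hΩb hg hgb
    (Φ := fun a => ‖a.1 - a.2‖ ^ p) (by fun_prop (disch := linarith))
  have hI₂ := integrableOn_comp_of_isBounded_image hΩo hΩb hg hgb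
    (Φ := fun a => ‖a.1‖ ^ p - ‖a.2‖ ^ p) (by fun_prop (disch := linarith))
  have hI₃ := integrableOn_comp_of_isBounded_image hΩo hΩb hg hgb
    (Φ := fun a => p * ⟪‖a.2‖ ^ (p - 2) • a.2, a.1 - a.2⟫) (by fun_prop (disch := linarith))
  calc c * ∫ x in Ω, ‖gradient v x - gradient ustar x‖ ^ p
      = ∫ x in Ω, c * ‖gradient v x - gradient ustar x‖ ^ p := (integral_const_mul c _).symm
    _ ≤ ∫ x in Ω, ((‖gradient v x‖ ^ p - ‖gradient ustar x‖ ^ p) - p *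
          ⟪‖gradient ustar x‖ ^ (p - 2) • gradient ustar x, gradient v x - gradient ustar x⟫) :=
        setIntegral_mono_on (hI₁.const_mul c) (hI₂.sub hI₃) hΩo.measurableSet fun x _ => by
          linarith [hA2 (gradient ustar x) (gradient v x)]
    _ = ∫ x in Ω, (‖gradient v x‖ ^ p - ‖gradient ustar x‖ ^ p) := by
        rw [integral_sub hI₂ hI₃, integral_const_mul,
          setIntegral_inner_gradient_sub_eq_zero_of_pLap_eq_zero hp hΩo hΩb hustar hpharm hv hvb,
          mul_zero, sub_zero]

/-- Quantitative minimality: with the constant `c(p)` of inequality (A2),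
`c(p) ∫ |∇v - ∇u*|^p ≤ ∫ (|∇v|^p - |∇u*|^p)` whenever `u*` is `p`-harmonic and
`v` has the same boundary values. -/
theorem pharmonic_quantitative_minimality {n : ℕ} (p c : ℝ) (hp : 2 ≤ p)
    (hc : c ∈ Set.Ioc (0 : ℝ) 1)
    (hA2 : ∀ a b : EuclideanSpace ℝ (Fin n),
      ‖a‖ ^ p + p * ⟪‖a‖ ^ (p - 2) • a, b - a⟫ + c * ‖b - a‖ ^ p ≤ ‖b‖ ^ p)
    (Ω : Set (EuclideanSpace ℝ (Fin n))) (hΩo : IsOpen Ω) (hΩb : Bornology.IsBounded Ω)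
    (ustar v : EuclideanSpace ℝ (Fin n) → ℝ)
    (hustar : ContDiffOn ℝ 2 ustar (closure Ω))
    (hpharm : ∀ x ∈ Ω, pLap p ustar x = 0)
    (hv : ContDiffOn ℝ 1 v (closure Ω))
    (hvb : ∀ x ∈ frontier Ω, v x = ustar x) :
    c * ∫ x in Ω, ‖gradient v x - gradient ustar x‖ ^ p
      ≤ ∫ x in Ω, (‖gradient v x‖ ^ p - ‖gradient ustar x‖ ^ p) :=
  pharmonic_quantitative_minimality_general p c hp hA2 Ω hΩo hΩb ustar v hustar hpharm hv hvb
end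
end
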